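/- Let k ≥ 2 and d ≥ 2 be integers and consider n single-minded bidders over m items, where bidder i desires a set S_i of exactly k items with value 1, every item is desired by exactly d bidders, and |S_i ∩ S_{i′}| ≤ 1 for all i ≠ i′. If every bidder i independently draws x ∈ [0,1/k] from the distribution with cumulative distribution function G(x) = (kx)^{1/((d−1)(k−1))} and bids x on every item of S_i and 0 on all other items, then this profile of mixed strategies is a mixed Nash equilibrium under any tie-breaking rule, and each bidder's expected utility is 0. -/

import Mathlib

/-!
Fix a bidder `i` and a deviation `c ≥ 0`. Almost surely no other bidder bids `0` on an item he
desires or exactly one of the bids of `i`, so whatever the tie-breaking rule, `i` wins item `j`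
iff his `d - 1` competitors on `j` all bid below `c j`. Two bidders share at most one item, so
these events are independent across the items of `S i`, each of probability
`H (c j) = G (c j) ^ (d - 1) = min (k c j) 1 ^ (1 / (k - 1))`. The expected utility is therefore
at most `∏ j ∈ S i, H (c j) - ∑ j ∈ S i, c j * H (c j)`, which is `≤ 0` by AM-GM, with equality
when `c` is `x ∈ (0, 1/k]` on `S i` and `0` elsewhere, because `H x ^ k = k x * H x`.
Conditioning on the own draw of `i` then shows that the equilibrium utility is `0`.
-/

open MeasureTheory Finset

/-- A valuation: monotone non-decreasing with value `0` on the empty set. -/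
def MonotoneVal {M : Type*} (v : Finset M → ℝ) : Prop :=
  v ∅ = 0 ∧ ∀ S T : Finset M, S ⊆ T → v S ≤ v T

/-- `S` assigns every item to exactly one bidder (it is a partition of the items). -/
def IsAllocation {N M : Type*} (S : N → Finset M) : Prop :=
  ∀ j : M, ∃! i : N, j ∈ S i

/-- A tie-breaking rule: it maps every bid profile to a partition of the items
in which every item goes to a bidder whose bid on it is highest. -/
structure TieRule (N M : Type*) where
  alloc : (N → M → ℝ) → N → Finset M
  partition : ∀ b, IsAllocation (alloc b)
  highest : ∀ b i j, j ∈ alloc b i → ∀ i', b i' j ≤ b i j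

/-- Bidder `i`'s (quasi-linear) utility in the simultaneous first-price auction. -/
def utility {N M : Type*} (v : N → Finset M → ℝ) (T : TieRule N M)
    (b : N → M → ℝ) (i : N) : ℝ :=
  v i (T.alloc b i) - ∑ j ∈ T.alloc b i, b i j

/-- Pure Nash equilibrium: no bidder can strictly gain by a unilateral
(nonnegative) deviation. -/
def PureNash {N M : Type*} [DecidableEq N] (v : N → Finset M → ℝ) (T : TieRule N M)
    (b : N → M → ℝ) : Prop :=
  ∀ (i : N) (b' : M → ℝ), (∀ j, 0 ≤ b' j) →
    utility v T (Function.update b i b') i ≤ utility v T b i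

/-- `ε`-equilibrium: no bidder can gain more than `ε` by a unilateral deviation. -/
def EpsNash {N M : Type*} [DecidableEq N] (v : N → Finset M → ℝ) (T : TieRule N M)
    (b : N → M → ℝ) (ε : ℝ) : Prop :=
  ∀ (i : N) (b' : M → ℝ), (∀ j, 0 ≤ b' j) →
    utility v T (Function.update b i b') i ≤ utility v T b i + ε

/-- Walrasian equilibrium: a partition and nonnegative item prices such that
every bidder receives a demanded set. -/
def Walrasian {N M : Type*} (v : N → Finset M → ℝ) (S : N → Finset M) (p : M → ℝ) : Prop :=
  IsAllocation S ∧ (∀ j, 0 ≤ p j) ∧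
    ∀ (i : N) (T : Finset M), v i T - ∑ j ∈ T, p j ≤ v i (S i) - ∑ j ∈ S i, p j

/-- Social welfare of an allocation. -/
def welfare {N M : Type*} [Fintype N] (v : N → Finset M → ℝ) (S : N → Finset M) : ℝ :=
  ∑ i, v i (S i)

/-- Expected utility of bidder `i` when bidders bid independently according to
the mixed strategies `σ`. -/
noncomputable def expectedUtility {N M : Type*} [Fintype N]
    (v : N → Finset M → ℝ) (T : TieRule N M) (σ : N → Measure (M → ℝ)) (i : N) : ℝ :=
  ∫ b, utility v T b i ∂(Measure.pi σ)

/-- Mixed Nash equilibrium: no bidder can gain by deviating to any fixed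
(nonnegative) bid vector. -/
def MixedNash {N M : Type*} [Fintype N] [DecidableEq N]
    (v : N → Finset M → ℝ) (T : TieRule N M) (σ : N → Measure (M → ℝ)) : Prop :=
  ∀ (i : N) (b' : M → ℝ), (∀ j, 0 ≤ b' j) →
    expectedUtility v T (Function.update σ i (Measure.dirac b')) i ≤
      expectedUtility v T σ i

/-- Expected social welfare of a profile of mixed strategies. -/
noncomputable def expectedWelfare {N M : Type*} [Fintype N]
    (v : N → Finset M → ℝ) (T : TieRule N M) (σ : N → Measure (M → ℝ)) : ℝ :=
  ∫ b, welfare v (T.alloc b) ∂(Measure.pi σ)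

/-- Every mixed strategy is supported on nonnegative bid vectors. -/
def NonnegMixed {N M : Type*} (σ : N → Measure (M → ℝ)) : Prop :=
  ∀ i, σ i {b | ∀ j, 0 ≤ b j} = 1

/-- The AND valuation: value `1` on the full set of items, `0` on proper subsets. -/
def andVal (M : Type*) [Fintype M] [DecidableEq M] : Finset M → ℝ :=
  fun S => if S = Finset.univ then 1 else 0

/-- The OR valuation: value `v` on every nonempty set of items, `0` on `∅`. -/
def orVal (M : Type*) (v : ℝ) : Finset M → ℝ :=
  fun S => if S.Nonempty then v else 0

/-- A single-minded valuation: value `w` on every superset of `S`, `0` otherwise. -/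
def singleMinded {M : Type*} [DecidableEq M] (S : Finset M) (w : ℝ) : Finset M → ℝ :=
  fun T => if S ⊆ T then w else 0

/-- `β`-XOS (β-fractionally subadditive) valuation. -/
def BetaXOS {M : Type*} (β : ℝ) (v : Finset M → ℝ) : Prop :=
  ∃ (k : ℕ) (lam : Fin (k + 1) → M → ℝ),
    (∀ l j, 0 ≤ lam l j) ∧
    ∀ S : Finset M,
      (Finset.univ.sup' Finset.univ_nonempty fun l => ∑ j ∈ S, lam l j) ≤ v S ∧
      v S / β ≤ Finset.univ.sup' Finset.univ_nonempty fun l => ∑ j ∈ S, lam l j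


open Function ProbabilityTheory

section PiUpdate

variable {ι α : Type*} [Fintype ι] [DecidableEq ι] [MeasurableSpace α]
  {σ : ι → Measure α} [∀ i, IsProbabilityMeasure (σ i)]

instance isProbabilityMeasure_update {i : ι} {ν : Measure α} [IsProbabilityMeasure ν] (i' : ι) :
    IsProbabilityMeasure (update σ i ν i') := by
  rcases eq_or_ne i' i with rfl | h
  · rwa [update_self]
  · rw [update_of_ne h]; infer_instance

theorem MeasureTheory.Measure.pi_update_eq_map_prod (i : ι) (ν : Measure α)
    [IsProbabilityMeasure ν] :
    Measure.pi (update σ i ν) = (ν.prod (Measure.pi σ)).map fun p => update p.2 i p.1 := by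
  refine Measure.pi_eq fun s hs => ?_
  have hpre : (fun p : α × (ι → α) => update p.2 i p.1) ⁻¹' Set.univ.pi s =
      s i ×ˢ Set.univ.pi (update s i Set.univ) := by
    ext ⟨a, y⟩
    simp only [Set.mem_preimage, Set.mem_pi, Set.mem_univ, true_implies, Set.mem_prod]
    constructor
    · intro h
      refine ⟨by simpa using h i, fun i' => ?_⟩
      rcases eq_or_ne i' i with rfl | h'
      · simp
      · simpa [h'] using h i'
    · rintro ⟨ha, hy⟩ i'
      rcases eq_or_ne i' i with rfl | h'
      · simpa using ha
      · simpa [h'] using hy i'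
  rw [Measure.map_apply (by fun_prop) (MeasurableSet.univ_pi hs), hpre, Measure.prod_prod,
    Measure.pi_pi]
  simp only [apply_update (fun i' (μ : Measure α) => μ (s i')),
    apply_update (fun i' (t : Set α) => σ i' t), measure_univ]
  rw [Finset.prod_update_of_mem (Finset.mem_univ i), Finset.prod_update_of_mem (Finset.mem_univ i),
    one_mul]

theorem MeasureTheory.Measure.pi_update_dirac (i : ι) (a : α) :
    Measure.pi (update σ i (Measure.dirac a)) = (Measure.pi σ).map fun y => update y i a := by
  rw [Measure.pi_update_eq_map_prod, Measure.dirac_prod,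
    Measure.map_map (by fun_prop) measurable_prodMk_left]
  rfl

theorem integral_pi_eq_integral_integral_update_dirac {β : Type*} [MeasurableSpace β]
    {ν : Measure β} [IsProbabilityMeasure ν] {f : β → α} (hf : Measurable f) {i : ι}
    (hσi : σ i = ν.map f) {F : (ι → α) → ℝ} (hF : Measurable F)
    (hFi : Integrable F (Measure.pi σ)) :
    ∫ b, F b ∂Measure.pi σ = ∫ x, ∫ b, F b ∂Measure.pi (update σ i (Measure.dirac (f x))) ∂ν := by
  have hupd : Measurable fun p : β × (ι → α) => update p.2 i (f p.1) := by fun_prop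
  have hmap : Measure.pi σ = (ν.prod (Measure.pi σ)).map fun p => update p.2 i (f p.1) := by
    conv_lhs => rw [← update_eq_self i σ, Measure.pi_update_eq_map_prod, hσi]
    rw [← Measure.map_id (μ := Measure.pi σ), Measure.map_prod_map _ _ hf measurable_id,
      Measure.map_map (by fun_prop) (hf.prodMap measurable_id), Measure.map_id]
    rfl
  rw [hmap] at hFi
  conv_lhs => rw [hmap]
  rw [integral_map hupd.aemeasurable hF.aestronglyMeasurable,
    integral_prod (fun p => F (update p.2 i (f p.1)))
      ((integrable_map_measure hF.aestronglyMeasurable hupd.aemeasurable).mp hFi)]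
  refine integral_congr_ae (ae_of_all _ fun x => ?_)
  dsimp only
  rw [Measure.pi_update_dirac, integral_map measurable_update_left.aemeasurable
    hF.aestronglyMeasurable]

theorem ae_pi_of_ae_update_dirac {β : Type*} [MeasurableSpace β] {ν : Measure β}
    [IsProbabilityMeasure ν] {f : β → α} (hf : Measurable f) {i : ι} (hσi : σ i = ν.map f)
    {p : (ι → α) → Prop} (hp : MeasurableSet {b | p b})
    (h : ∀ᵐ x ∂ν, ∀ᵐ b ∂Measure.pi (update σ i (Measure.dirac (f x))), p b) :
    ∀ᵐ b ∂Measure.pi σ, p b := by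
  have hnull := integral_pi_eq_integral_integral_update_dirac hf hσi
    (F := {b | p b}ᶜ.indicator 1) (measurable_one.indicator hp.compl)
    ((integrable_const (1 : ℝ)).indicator hp.compl)
  rw [integral_congr_ae (h.mono fun x hx => ?_), integral_zero,
    integral_indicator_one hp.compl, measureReal_eq_zero_iff] at hnull
  · exact hnull
  · rw [integral_indicator_one hp.compl, measureReal_eq_zero_iff]
    exact hx

end PiUpdate

theorem nullSingletonClass_of_continuous_cdf {μ : Measure ℝ} [IsProbabilityMeasure μ]
    (h : Continuous (cdf μ)) : NullSingletonClass μ where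
  measure_singleton a := by
    rw [← measure_cdf μ, StieltjesFunction.measure_singleton,
      h.continuousAt.continuousWithinAt.leftLim_eq, sub_self, ENNReal.ofReal_zero]

/-- The distribution function `G` of the statement, with its three cases folded into a clamp. -/
noncomputable def bidCDF (k d : ℕ) (x : ℝ) : ℝ :=
  max 0 (min (k * x) 1) ^ (1 / ((d - 1) * (k - 1)) : ℝ)

section BidCDF

variable {k d : ℕ}

theorem bidCDF_nonneg (x : ℝ) : 0 ≤ bidCDF k d x :=
  Real.rpow_nonneg (le_max_left _ _) _

theorem one_div_pred_mul_pred_pos (hk : 2 ≤ k) (hd : 2 ≤ d) :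
    0 < (1 / ((d - 1) * (k - 1)) : ℝ) := by
  have hk' : (2 : ℝ) ≤ k := by exact_mod_cast hk
  have hd' : (2 : ℝ) ≤ d := by exact_mod_cast hd
  have : 0 < ((d : ℝ) - 1) * (k - 1) := by nlinarith
  positivity

theorem continuous_bidCDF (hk : 2 ≤ k) (hd : 2 ≤ d) : Continuous (bidCDF k d) :=
  (by fun_prop : Continuous fun x : ℝ => max 0 (min (k * x) 1)).rpow_const
    fun _ => Or.inr (one_div_pred_mul_pred_pos hk hd).le

theorem bidCDF_of_nonpos (hk : 2 ≤ k) (hd : 2 ≤ d) {x : ℝ} (hx : x ≤ 0) : bidCDF k d x = 0 := by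
  have : min ((k : ℝ) * x) 1 ≤ 0 :=
    (min_le_left _ _).trans (mul_nonpos_of_nonneg_of_nonpos (by positivity) hx)
  rw [bidCDF, max_eq_left this, Real.zero_rpow (one_div_pred_mul_pred_pos hk hd).ne']

theorem bidCDF_of_mem_Icc (hk : 2 ≤ k) {x : ℝ} (hx₀ : 0 ≤ x) (hx : x ≤ 1 / k) :
    bidCDF k d x = (k * x) ^ (1 / ((d - 1) * (k - 1)) : ℝ) := by
  have hk0 : (0 : ℝ) < k := by exact_mod_cast (by omega : 0 < k)
  have : (k : ℝ) * x ≤ 1 := by rwa [le_div_iff₀' hk0] at hx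
  rw [bidCDF, min_eq_left this, max_eq_right (by positivity)]

theorem bidCDF_of_le (hk : 2 ≤ k) {x : ℝ} (hx : 1 / k ≤ x) : bidCDF k d x = 1 := by
  have hk0 : (0 : ℝ) < k := by exact_mod_cast (by omega : 0 < k)
  have : 1 ≤ (k : ℝ) * x := by rwa [div_le_iff₀' hk0] at hx
  rw [bidCDF, min_eq_right this, max_eq_right zero_le_one, Real.one_rpow]

theorem bidCDF_pow_pred (hd : 2 ≤ d) {x : ℝ} (hx : 0 ≤ x) :
    bidCDF k d x ^ (d - 1) = min (k * x) 1 ^ (1 / (k - 1) : ℝ) := by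
  have hmin : 0 ≤ min ((k : ℝ) * x) 1 := le_min (by positivity) zero_le_one
  have hd1 : ((d - 1 : ℕ) : ℝ) = d - 1 := by rw [Nat.cast_sub (by omega), Nat.cast_one]
  have hd1' : (d : ℝ) - 1 ≠ 0 := by rw [← hd1]; exact_mod_cast (by omega : d - 1 ≠ 0)
  rw [bidCDF, max_eq_right hmin, ← Real.rpow_natCast, ← Real.rpow_mul hmin, hd1]
  congr 1
  field_simp

variable {μ : Measure ℝ} [IsProbabilityMeasure μ]
  (hμ : ∀ x, μ (Set.Iic x) = ENNReal.ofReal (bidCDF k d x))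
include hμ

theorem cdf_eq_bidCDF : cdf μ = bidCDF k d := by
  ext x
  rw [cdf_eq_real, measureReal_def, hμ, ENNReal.toReal_ofReal (bidCDF_nonneg x)]

theorem nullSingletonClass_of_bidCDF (hk : 2 ≤ k) (hd : 2 ≤ d) : NullSingletonClass μ :=
  nullSingletonClass_of_continuous_cdf (cdf_eq_bidCDF hμ ▸ continuous_bidCDF hk hd)

theorem ae_mem_Ioc_of_bidCDF (hk : 2 ≤ k) (hd : 2 ≤ d) :
    ∀ᵐ x ∂μ, x ∈ Set.Ioc 0 (1 / k : ℝ) := by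
  rw [ae_iff, ← Set.compl_def, prob_compl_eq_zero_iff measurableSet_Ioc, ← measure_cdf μ,
    StieltjesFunction.measure_Ioc, cdf_eq_bidCDF hμ, bidCDF_of_le hk le_rfl,
    bidCDF_of_nonpos hk hd le_rfl, sub_zero, ENNReal.ofReal_one]

theorem measureReal_Iio_pow_pred_of_bidCDF (hk : 2 ≤ k) (hd : 2 ≤ d) {y : ℝ} (hy : 0 ≤ y) :
    μ.real (Set.Iio y) ^ (d - 1) = min (k * y) 1 ^ (1 / (k - 1) : ℝ) := by
  have := nullSingletonClass_of_bidCDF hμ hk hd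
  rw [measureReal_def, measure_congr Iio_ae_eq_Iic, hμ,
    ENNReal.toReal_ofReal (bidCDF_nonneg y), bidCDF_pow_pred hd hy]

end BidCDF

theorem prod_le_sum_pow_card_div_card {ι : Type*} {J : Finset ι} (hJ : J.Nonempty) {v : ι → ℝ}
    (hv : ∀ j ∈ J, 0 ≤ v j) : ∏ j ∈ J, v j ≤ (∑ j ∈ J, v j ^ #J) / #J := by
  have hcard : (#J : ℝ) ≠ 0 := by exact_mod_cast hJ.card_pos.ne'
  have h := Real.geom_mean_le_arith_mean_weighted J (fun _ => (#J : ℝ)⁻¹) (fun j => v j ^ #J)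
    (fun _ _ => by positivity) (by simp [hcard]) (fun j hj => pow_nonneg (hv j hj) _)
  rw [← mul_sum, inv_mul_eq_div] at h
  refine le_of_eq_of_le (prod_congr rfl fun j hj => ?_) h
  exact (Real.pow_rpow_inv_natCast (hv j hj) hJ.card_pos.ne').symm

theorem rpow_one_div_pred_pow {k : ℕ} (hk : 2 ≤ k) {u : ℝ} (hu : 0 ≤ u) :
    (u ^ (1 / (k - 1) : ℝ)) ^ k = u * u ^ (1 / (k - 1) : ℝ) := by
  have hk1 : (0 : ℝ) < k - 1 := by
    have : (2 : ℝ) ≤ k := by exact_mod_cast hk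
    linarith
  have hexp : 1 / (k - 1) * (k : ℝ) = 1 + 1 / (k - 1) := by field_simp; ring
  rw [← Real.rpow_natCast, ← Real.rpow_mul hu, hexp, Real.rpow_add' hu (by positivity),
    Real.rpow_one]

theorem prod_min_rpow_le_sum {ι : Type*} {k : ℕ} (hk : 2 ≤ k) {J : Finset ι} (hJ : #J = k)
    {c : ι → ℝ} (hc : ∀ j ∈ J, 0 ≤ c j) :
    ∏ j ∈ J, min (k * c j) 1 ^ (1 / (k - 1) : ℝ) ≤
      ∑ j ∈ J, c j * min (k * c j) 1 ^ (1 / (k - 1) : ℝ) := by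
  have hk0 : (0 : ℝ) < k := by exact_mod_cast (by omega : 0 < k)
  have hu : ∀ j ∈ J, 0 ≤ min (k * c j) 1 := fun j hj =>
    le_min (mul_nonneg hk0.le (hc j hj)) zero_le_one
  calc ∏ j ∈ J, min (k * c j) 1 ^ (1 / (k - 1) : ℝ)
      ≤ (∑ j ∈ J, (min (k * c j) 1 ^ (1 / (k - 1) : ℝ)) ^ k) / k := by
        simpa [hJ] using prod_le_sum_pow_card_div_card (card_pos.1 (by omega))
          fun j hj => Real.rpow_nonneg (hu j hj) _
    _ = ∑ j ∈ J, min (k * c j) 1 / k * min (k * c j) 1 ^ (1 / (k - 1) : ℝ) := by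
        rw [sum_div]
        refine sum_congr rfl fun j hj => ?_
        rw [rpow_one_div_pred_pow hk (hu j hj)]
        ring
    _ ≤ ∑ j ∈ J, c j * min (k * c j) 1 ^ (1 / (k - 1) : ℝ) := by
        refine sum_le_sum fun j hj => mul_le_mul_of_nonneg_right ?_ (Real.rpow_nonneg (hu j hj) _)
        rw [div_le_iff₀ hk0, mul_comm]
        exact min_le_left _ _

theorem TieRule.mem_alloc_of_forall_lt {N M : Type*} (T : TieRule N M) {b : N → M → ℝ} {i : N}
    {j : M} (h : ∀ i', i' ≠ i → b i' j < b i j) : j ∈ T.alloc b i := by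
  obtain ⟨w, hw, -⟩ := T.partition b j
  obtain rfl | hwi := eq_or_ne w i
  · exact hw
  · exact absurd (T.highest b w j hw i) (not_le.2 (h w hwi))

def genericProfiles {N M : Type*} (S : N → Finset M) (i : N) : Set (N → M → ℝ) :=
  {b | ∀ i', i' ≠ i → (∀ j ∉ S i', b i' j = 0) ∧ ∀ j ∈ S i', 0 < b i' j ∧ ∀ j', b i' j ≠ b i j'}

theorem measurableSet_genericProfiles {N M : Type*} [Finite N] [Finite M] (S : N → Finset M)
    (i : N) : MeasurableSet (genericProfiles S i) := by
  unfold genericProfiles; measurability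

section Auction

variable {N M : Type*} [Fintype N] [DecidableEq N] [DecidableEq M] {S : N → Finset M} {i : N}

variable (S i) in
def competitors (j : M) : Finset N :=
  (univ.filter fun i' => j ∈ S i').erase i

variable (S i) in
def winSet (t : M → ℝ) (j : M) : Set (N → M → ℝ) :=
  {b | ∀ i' ∈ competitors S i j, b i' j < t j}

variable (S i) in
theorem measurableSet_winSet (t : M → ℝ) (j : M) : MeasurableSet (winSet S i t j) := by
  unfold winSet; measurability

theorem card_competitors_of_mem {d : ℕ} (hdeg : ∀ j, #(univ.filter fun i => j ∈ S i) = d)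
    {j : M} (hj : j ∈ S i) : #(competitors S i j) = d - 1 := by
  rw [competitors, card_erase_of_mem (by simpa using hj), hdeg]

theorem competitors_nonempty {d : ℕ} (hd : 2 ≤ d)
    (hdeg : ∀ j, #(univ.filter fun i => j ∈ S i) = d) (j : M) : (competitors S i j).Nonempty := by
  rw [← card_pos]
  have := pred_card_le_card_erase (s := univ.filter fun i' => j ∈ S i') (a := i)
  rw [hdeg] at this
  exact lt_of_lt_of_le (by omega) this

theorem mem_alloc_iff_mem_winSet (T : TieRule N M) (hcomp : ∀ j, (competitors S i j).Nonempty)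
    {b : N → M → ℝ} (hb : b ∈ genericProfiles S i) (j : M) :
    j ∈ T.alloc b i ↔ b ∈ winSet S i (b i) j := by
  have mem_comp : ∀ {i'}, i' ∈ competitors S i j ↔ i' ≠ i ∧ j ∈ S i' := by
    simp [competitors]
  constructor
  · intro hj i' hi'
    exact (T.highest b i j hj i').lt_of_ne
      (((hb i' (mem_comp.1 hi').1).2 j (mem_comp.1 hi').2).2 j)
  · intro hwin
    refine T.mem_alloc_of_forall_lt fun i' hi' => ?_
    by_cases hj : j ∈ S i'
    · exact hwin i' (mem_comp.2 ⟨hi', hj⟩)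
    · obtain ⟨i₀, hi₀⟩ := hcomp j
      rw [(hb i' hi').1 j hj]
      exact ((hb i₀ (mem_comp.1 hi₀).1).2 j (mem_comp.1 hi₀).2).1.trans (hwin i₀ hi₀)

variable [Fintype M]

variable (S i) in
noncomputable def winUtility (t : M → ℝ) (b : N → M → ℝ) : ℝ :=
  (⋂ j ∈ S i, winSet S i t j).indicator 1 b - ∑ j, t j * (winSet S i t j).indicator 1 b

theorem utility_eq_winUtility (T : TieRule N M) (hcomp : ∀ j, (competitors S i j).Nonempty)
    {b : N → M → ℝ} (hb : b ∈ genericProfiles S i) :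
    utility (fun i => singleMinded (S i) 1) T b i = winUtility S i (b i) b := by
  have hwin := mem_alloc_iff_mem_winSet T hcomp hb
  classical
  have hvalue : singleMinded (S i) 1 (T.alloc b i) =
      (⋂ j ∈ S i, winSet S i (b i) j).indicator 1 b := by
    simp only [singleMinded, Set.indicator_apply, Set.mem_iInter₂, subset_iff, ← hwin,
      Pi.one_apply]
  have hpay : ∑ j ∈ T.alloc b i, b i j = ∑ j, b i j * (winSet S i (b i) j).indicator 1 b := by
    simp only [Set.indicator_apply, ← hwin, Pi.one_apply, mul_ite, mul_one, mul_zero,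
      sum_ite_mem, univ_inter]
  rw [utility, hvalue, hpay, winUtility]

variable (S i) in
theorem measurable_winUtility_self : Measurable fun b => winUtility S i (b i) b := by
  classical
  have hall : MeasurableSet {b : N → M → ℝ | ∀ j ∈ S i, b ∈ winSet S i (b i) j} := by
    simp only [winSet, Set.mem_ofPred_eq]; measurability
  have hwin : ∀ j, MeasurableSet {b : N → M → ℝ | b ∈ winSet S i (b i) j} := fun j => by
    simp only [winSet, Set.mem_ofPred_eq]; measurability
  simp only [winUtility, Set.indicator_apply, Set.mem_iInter₂, Pi.one_apply]
  exact (measurable_const.ite hall measurable_const).sub (Finset.measurable_sum _ fun j _ =>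
    ((measurable_pi_apply j).comp (measurable_pi_apply i)).mul
      (measurable_const.ite (hwin j) measurable_const))

variable (S i) in
theorem abs_winUtility_le (t : M → ℝ) (b : N → M → ℝ) :
    |winUtility S i t b| ≤ 1 + ∑ j, |t j| := by
  classical
  have hind : ∀ s : Set (N → M → ℝ), |s.indicator (1 : (N → M → ℝ) → ℝ) b| ≤ 1 := fun s => by
    rw [Set.indicator_apply]; split_ifs <;> simp
  refine (abs_sub _ _).trans (add_le_add (hind _)
    ((abs_sum_le_sum_abs _ _).trans (sum_le_sum fun j _ => ?_)))
  rw [abs_mul]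
  exact mul_le_of_le_one_right (abs_nonneg _) (hind _)

end Auction

section BidVector

variable {M : Type*} [DecidableEq M] {s : Finset M} {x : ℝ} {j : M}

def bidVector (s : Finset M) (x : ℝ) : M → ℝ := fun j => if j ∈ s then x else 0

theorem bidVector_of_mem (hj : j ∈ s) : bidVector s x j = x := if_pos hj

theorem bidVector_of_notMem (hj : j ∉ s) : bidVector s x j = 0 := if_neg hj

theorem measurable_bidVector (s : Finset M) : Measurable (bidVector s) :=
  measurable_pi_lambda _ fun j => by unfold bidVector; split_ifs <;> fun_prop

end BidVector

noncomputable def bidStrategy {N M : Type*} [DecidableEq M] (μ : Measure ℝ) (S : N → Finset M)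
    (i : N) : Measure (M → ℝ) :=
  μ.map (bidVector (S i))

instance isProbabilityMeasure_bidStrategy {N M : Type*} [DecidableEq M] {μ : Measure ℝ}
    [IsProbabilityMeasure μ] {S : N → Finset M} (i : N) :
    IsProbabilityMeasure (bidStrategy μ S i) :=
  Measure.isProbabilityMeasure_map (measurable_bidVector _).aemeasurable

theorem bidStrategy_setOf_forall_lt {N M : Type*} [DecidableEq M] {μ : Measure ℝ}
    [IsProbabilityMeasure μ] {S : N → Finset M} {i' : N} {K : Finset M} (hKS : K ⊆ S i')
    (hK : #K ≤ 1) (t : M → ℝ) :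
    bidStrategy μ S i' {v | ∀ j ∈ K, v j < t j} = ∏ j ∈ K, μ (Set.Iio (t j)) := by
  have hmeas : MeasurableSet {v : M → ℝ | ∀ j ∈ K, v j < t j} := by
    simp only [Set.ofPred_forall]
    exact Finset.measurableSet_biInter _ fun j _ =>
      measurableSet_lt (measurable_pi_apply j) measurable_const
  rw [bidStrategy, Measure.map_apply (measurable_bidVector _) hmeas]
  obtain h | h := Nat.le_one_iff_eq_zero_or_eq_one.1 hK
  · simp [Finset.card_eq_zero.1 h]
  · obtain ⟨j₀, rfl⟩ := Finset.card_eq_one.1 h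
    have hj₀ : j₀ ∈ S i' := hKS (Finset.mem_singleton_self j₀)
    simp [bidVector, hj₀, Set.Iio]

section BidStrategy

variable {N M : Type*} [Fintype N] [DecidableEq N] [Fintype M] [DecidableEq M]
  {μ : Measure ℝ} [IsProbabilityMeasure μ] {S : N → Finset M} {i : N}

theorem ae_update_dirac_bidStrategy [NullSingletonClass μ] (hpos : ∀ᵐ x ∂μ, 0 < x)
    (c : M → ℝ) :
    ∀ᵐ b ∂Measure.pi (update (bidStrategy μ S) i (Measure.dirac c)),
      b i = c ∧ b ∈ genericProfiles S i := by
  set τ := update (bidStrategy μ S) i (Measure.dirac c) with hτ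
  have heval : ∀ i' {p : (M → ℝ) → Prop}, (∀ᵐ v ∂τ i', p v) → ∀ᵐ b ∂Measure.pi τ, p (b i') :=
    fun _ _ h => Measure.tendsto_eval_ae_ae.eventually h
  have hself : ∀ᵐ b ∂Measure.pi τ, b i = c := by
    refine heval i (p := (· = c)) ?_
    rw [hτ, update_self]
    exact (ae_dirac_iff (measurableSet_singleton c)).2 rfl
  have hothers : ∀ᵐ b ∂Measure.pi τ, ∀ i', i' ≠ i →
      (∀ j ∉ S i', b i' j = 0) ∧ ∀ j ∈ S i', 0 < b i' j ∧ ∀ j', b i' j ≠ c j' := by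
    refine ae_all_iff.2 fun i' => ?_
    rcases eq_or_ne i' i with rfl | hi'
    · exact ae_of_all _ fun _ h => absurd rfl h
    refine (heval i' (p := fun v => (∀ j ∉ S i', v j = 0) ∧ ∀ j ∈ S i', 0 < v j ∧
      ∀ j', v j ≠ c j') ?_).mono fun b hb _ => hb
    rw [hτ, update_of_ne hi', bidStrategy, ae_map_iff (measurable_bidVector _).aemeasurable
      (by measurability)]
    filter_upwards [hpos, (Set.finite_range c).countable.ae_notMem μ] with x hx hxc
    refine ⟨fun j hj => bidVector_of_notMem hj, fun j hj => ?_⟩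
    rw [bidVector_of_mem hj]
    exact ⟨hx, fun j' h => hxc ⟨j', h.symm⟩⟩
  filter_upwards [hself, hothers] with b hb hothers
  exact ⟨hb, fun i' hi' => by simpa only [hb] using hothers i' hi'⟩

theorem ae_bidStrategy_genericProfiles [NullSingletonClass μ] (hpos : ∀ᵐ x ∂μ, 0 < x) :
    ∀ᵐ b ∂Measure.pi (bidStrategy μ S), b ∈ genericProfiles S i :=
  ae_pi_of_ae_update_dirac (σ := bidStrategy μ S) (measurable_bidVector (S i)) rfl
    (measurableSet_genericProfiles S i)
    (ae_of_all _ fun _ => (ae_update_dirac_bidStrategy hpos _).mono fun _ hb => hb.2)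

theorem measure_biInter_winSet (hinter : ∀ i', i' ≠ i → #(S i ∩ S i') ≤ 1)
    (ν : Measure (M → ℝ)) [IsProbabilityMeasure ν] (t : M → ℝ) {J : Finset M} (hJ : J ⊆ S i) :
    Measure.pi (update (bidStrategy μ S) i ν) (⋂ j ∈ J, winSet S i t j) =
      ∏ j ∈ J, μ (Set.Iio (t j)) ^ #(competitors S i j) := by
  set B : N → Set (M → ℝ) := fun i' => {v | ∀ j ∈ J ∩ S i', v j < t j}
  have hbox : ⋂ j ∈ J, winSet S i t j = Set.univ.pi (update B i Set.univ) := by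
    ext b
    simp only [Set.mem_iInter, winSet, competitors, Set.mem_ofPred_eq, Set.mem_pi, Set.mem_univ,
      true_implies, B]
    constructor
    · intro h i'
      rcases eq_or_ne i' i with rfl | hi'
      · simp
      rw [update_of_ne hi']
      intro j hj
      exact h j (mem_inter.1 hj).1 i' (by simp [hi', (mem_inter.1 hj).2])
    · intro h j hj i' hi'
      simp only [mem_erase, mem_filter, mem_univ, true_and] at hi'
      have hb := h i'
      rw [update_of_ne hi'.1] at hb
      exact hb j (mem_inter.2 ⟨hj, hi'.2⟩)
  rw [hbox, Measure.pi_pi]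
  simp only [apply_update₂ (fun i' (μ : Measure (M → ℝ)) s => μ s)]
  rw [prod_update_of_mem (mem_univ i), measure_univ, one_mul]
  -- each other bidder competes with `i` on at most one item of `J`
  calc ∏ i' ∈ univ \ {i}, bidStrategy μ S i' (B i')
      = ∏ i' ∈ univ \ {i}, ∏ j ∈ J ∩ S i', μ (Set.Iio (t j)) := by
        refine prod_congr rfl fun i' hi' => bidStrategy_setOf_forall_lt inter_subset_right ?_ t
        have hi' : i' ≠ i := by simpa using hi'
        exact (card_le_card (inter_subset_inter_right hJ)).trans (hinter i' hi')
    _ = ∏ j ∈ J, ∏ _i' ∈ competitors S i j, μ (Set.Iio (t j)) :=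
        prod_comm' fun i' j => by simp [competitors]; tauto
    _ = ∏ j ∈ J, μ (Set.Iio (t j)) ^ #(competitors S i j) := by simp

theorem measureReal_biInter_winSet (hinter : ∀ i', i' ≠ i → #(S i ∩ S i') ≤ 1)
    (ν : Measure (M → ℝ)) [IsProbabilityMeasure ν] (t : M → ℝ) {J : Finset M} (hJ : J ⊆ S i) :
    (Measure.pi (update (bidStrategy μ S) i ν)).real (⋂ j ∈ J, winSet S i t j) =
      ∏ j ∈ J, μ.real (Set.Iio (t j)) ^ #(competitors S i j) := by
  simp [measureReal_def, measure_biInter_winSet hinter ν t hJ, ENNReal.toReal_prod]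

theorem integral_utility_update_dirac [NullSingletonClass μ] (hpos : ∀ᵐ x ∂μ, 0 < x)
    (hinter : ∀ i', i' ≠ i → #(S i ∩ S i') ≤ 1) (hcomp : ∀ j, (competitors S i j).Nonempty)
    (T : TieRule N M) (c : M → ℝ) :
    ∫ b, utility (fun i => singleMinded (S i) 1) T b i
        ∂Measure.pi (update (bidStrategy μ S) i (Measure.dirac c)) =
      ∏ j ∈ S i, μ.real (Set.Iio (c j)) ^ #(competitors S i j)
        - ∑ j ∈ S i, c j * μ.real (Set.Iio (c j)) ^ #(competitors S i j)
        - ∑ j ∈ (S i)ᶜ, c j *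
          (Measure.pi (update (bidStrategy μ S) i (Measure.dirac c))).real (winSet S i c j) := by
  set P := Measure.pi (update (bidStrategy μ S) i (Measure.dirac c))
  have hwin := measurableSet_winSet S i c
  have hall : MeasurableSet (⋂ j ∈ S i, winSet S i c j) :=
    Finset.measurableSet_biInter _ fun j _ => hwin j
  have hint_all : Integrable ((⋂ j ∈ S i, winSet S i c j).indicator 1) P :=
    (integrable_const (1 : ℝ)).indicator hall
  have hint : ∀ j, Integrable (fun b => c j * (winSet S i c j).indicator 1 b) P := fun j =>
    ((integrable_const (1 : ℝ)).indicator (hwin j)).const_mul (c j)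
  have hae : (fun b => utility (fun i => singleMinded (S i) 1) T b i) =ᵐ[P] winUtility S i c := by
    filter_upwards [ae_update_dirac_bidStrategy hpos c] with b ⟨hbi, hb⟩
    rw [utility_eq_winUtility T hcomp hb, hbi]
  have hsingle : ∀ j ∈ S i,
      P.real (winSet S i c j) = μ.real (Set.Iio (c j)) ^ #(competitors S i j) := fun j hj => by
    simpa using measureReal_biInter_winSet hinter (Measure.dirac c) c (singleton_subset_iff.2 hj)
  rw [integral_congr_ae hae]
  unfold winUtility
  rw [integral_sub hint_all (integrable_finsetSum _ fun j _ => hint j),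
    integral_finsetSum _ fun j _ => hint j, integral_indicator_one hall,
    measureReal_biInter_winSet hinter _ c subset_rfl]
  simp only [integral_const_mul, integral_indicator_one (hwin _)]
  rw [← sum_add_sum_compl (S i), sum_congr rfl fun j hj => by rw [hsingle j hj]]
  ring

theorem integrable_winUtility_self_bidStrategy {C : ℝ} (hC : ∀ᵐ x ∂μ, |x| ≤ C) :
    Integrable (fun b => winUtility S i (b i) b) (Measure.pi (bidStrategy μ S)) := by
  have hbid : ∀ᵐ b ∂Measure.pi (bidStrategy μ S), ∀ j, |b i j| ≤ C := by
    refine Measure.tendsto_eval_ae_ae.eventually (p := fun v : M → ℝ => ∀ j, |v j| ≤ C) ?_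
    rw [bidStrategy, ae_map_iff (measurable_bidVector _).aemeasurable (by measurability)]
    filter_upwards [hC] with x hx j
    by_cases hj : j ∈ S i
    · rwa [bidVector_of_mem hj]
    · rw [bidVector_of_notMem hj, abs_zero]
      exact (abs_nonneg x).trans hx
  refine Integrable.of_bound (measurable_winUtility_self S i).aestronglyMeasurable
    (1 + Fintype.card M * C) ?_
  filter_upwards [hbid] with b hb
  refine (abs_winUtility_le S i (b i) b).trans (add_le_add le_rfl ?_)
  simpa using sum_le_sum fun j (_ : j ∈ univ) => hb j

variable {k d : ℕ} (hk : 2 ≤ k) (hd : 2 ≤ d) (hcard : ∀ i, #(S i) = k)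
  (hdeg : ∀ j, #(univ.filter fun i => j ∈ S i) = d)
  (hinter : ∀ i i', i ≠ i' → #(S i ∩ S i') ≤ 1)
  (hμ : ∀ x, μ (Set.Iic x) = ENNReal.ofReal (bidCDF k d x)) (T : TieRule N M)
include hk hd hcard hdeg hinter hμ

theorem integral_utility_update_dirac_nonpos {c : M → ℝ} (hc : ∀ j, 0 ≤ c j) :
    ∫ b, utility (fun i => singleMinded (S i) 1) T b i
      ∂Measure.pi (update (bidStrategy μ S) i (Measure.dirac c)) ≤ 0 := by
  have := nullSingletonClass_of_bidCDF hμ hk hd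
  have hq : ∀ j ∈ S i, μ.real (Set.Iio (c j)) ^ #(competitors S i j) =
      min (k * c j) 1 ^ (1 / (k - 1) : ℝ) := fun j hj => by
    rw [card_competitors_of_mem hdeg hj, measureReal_Iio_pow_pred_of_bidCDF hμ hk hd (hc j)]
  rw [integral_utility_update_dirac ((ae_mem_Ioc_of_bidCDF hμ hk hd).mono fun _ hx => hx.1)
    (fun i' hi' => hinter i i' hi'.symm) (competitors_nonempty hd hdeg) T c,
    prod_congr rfl hq, sum_congr rfl fun j hj => by rw [hq j hj]]
  have hamgm := prod_min_rpow_le_sum hk (hcard i) fun j _ => hc j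
  have hrest : 0 ≤ ∑ j ∈ (S i)ᶜ, c j *
      (Measure.pi (update (bidStrategy μ S) i (Measure.dirac c))).real (winSet S i c j) :=
    sum_nonneg fun j _ => mul_nonneg (hc j) measureReal_nonneg
  linarith

theorem integral_utility_update_dirac_bidVector_eq_zero {x : ℝ}
    (hx : x ∈ Set.Ioc 0 (1 / k : ℝ)) :
    ∫ b, utility (fun i => singleMinded (S i) 1) T b i
      ∂Measure.pi (update (bidStrategy μ S) i (Measure.dirac (bidVector (S i) x))) = 0 := by
  have := nullSingletonClass_of_bidCDF hμ hk hd
  have hk0 : (0 : ℝ) < k := by exact_mod_cast (by omega : 0 < k)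
  have hkx : (k : ℝ) * x ≤ 1 := by rw [← le_div_iff₀' hk0]; exact hx.2
  have hq : ∀ j ∈ S i, μ.real (Set.Iio (bidVector (S i) x j)) ^ #(competitors S i j) =
      (k * x) ^ (1 / (k - 1) : ℝ) := fun j hj => by
    rw [bidVector_of_mem hj, card_competitors_of_mem hdeg hj,
      measureReal_Iio_pow_pred_of_bidCDF hμ hk hd hx.1.le, min_eq_left hkx]
  have hsum : ∑ j ∈ S i, bidVector (S i) x j *
      μ.real (Set.Iio (bidVector (S i) x j)) ^ #(competitors S i j) =
      ∑ _j ∈ S i, x * (k * x) ^ (1 / (k - 1) : ℝ) :=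
    sum_congr rfl fun j hj => by rw [hq j hj, bidVector_of_mem hj]
  rw [integral_utility_update_dirac ((ae_mem_Ioc_of_bidCDF hμ hk hd).mono fun _ hx => hx.1)
    (fun i' hi' => hinter i i' hi'.symm) (competitors_nonempty hd hdeg) T _,
    prod_congr rfl hq, hsum, sum_eq_zero (s := (S i)ᶜ) fun j hj => by
      rw [bidVector_of_notMem (mem_compl.1 hj), zero_mul],
    prod_const, sum_const, hcard i, rpow_one_div_pred_pow hk (mul_nonneg hk0.le hx.1.le),
    nsmul_eq_mul]
  ring

theorem integral_utility_bidStrategy_eq_zero :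
    ∫ b, utility (fun i => singleMinded (S i) 1) T b i ∂Measure.pi (bidStrategy μ S) = 0 := by
  have := nullSingletonClass_of_bidCDF hμ hk hd
  have hIoc := ae_mem_Ioc_of_bidCDF hμ hk hd
  have hpos : ∀ᵐ x ∂μ, 0 < x := hIoc.mono fun _ hx => hx.1
  have hcomp : ∀ j, (competitors S i j).Nonempty := competitors_nonempty hd hdeg
  have hbdd : ∀ᵐ x ∂μ, |x| ≤ 1 := hIoc.mono fun x hx => by
    rw [abs_of_pos hx.1]
    exact hx.2.trans (div_le_one_of_le₀ (by exact_mod_cast (by omega : 1 ≤ k)) (Nat.cast_nonneg k))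
  -- `utility` need not be measurable (the tie-breaking rule is arbitrary), so Fubini is
  -- applied to `winUtility`.
  calc ∫ b, utility (fun i => singleMinded (S i) 1) T b i ∂Measure.pi (bidStrategy μ S)
      = ∫ b, winUtility S i (b i) b ∂Measure.pi (bidStrategy μ S) :=
        integral_congr_ae ((ae_bidStrategy_genericProfiles hpos).mono fun _ hb =>
          utility_eq_winUtility T hcomp hb)
    _ = ∫ x, ∫ b, winUtility S i (b i) b
          ∂Measure.pi (update (bidStrategy μ S) i (Measure.dirac (bidVector (S i) x))) ∂μ :=
        integral_pi_eq_integral_integral_update_dirac (σ := bidStrategy μ S)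
          (measurable_bidVector _) rfl (measurable_winUtility_self S i)
          (integrable_winUtility_self_bidStrategy hbdd)
    _ = ∫ x, ∫ b, utility (fun i => singleMinded (S i) 1) T b i
          ∂Measure.pi (update (bidStrategy μ S) i (Measure.dirac (bidVector (S i) x))) ∂μ :=
        integral_congr_ae (ae_of_all _ fun x => integral_congr_ae
          ((ae_update_dirac_bidStrategy hpos _).mono fun _ hb =>
            (utility_eq_winUtility T hcomp hb.2).symm))
    _ = 0 := integral_eq_zero_of_ae (hIoc.mono fun _ hx =>
        integral_utility_update_dirac_bidVector_eq_zero hk hd hcard hdeg hinter hμ T hx)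

end BidStrategy

/-- Single-minded bidders, each desiring a set `S i` of exactly `k` items with
value `1`, each item desired by exactly `d` bidders, and `|S i ∩ S i'| ≤ 1` for `i ≠ i'`.
If every bidder draws `x` from the CDF `G(x) = (kx)^(1/((d-1)(k-1)))` on `[0,1/k]` and bids
`x` on every item of `S i` and `0` elsewhere, then this is a mixed Nash equilibrium under
any tie-breaking rule, and every bidder's expected utility is `0`. -/
theorem single_minded_mixed_nash {n m : ℕ} (k d : ℕ) (hk : 2 ≤ k) (hd : 2 ≤ d)
    (S : Fin n → Finset (Fin m))
    (hcard : ∀ i, (S i).card = k)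
    (hdeg : ∀ j : Fin m, (Finset.univ.filter fun i => j ∈ S i).card = d)
    (hinter : ∀ i i', i ≠ i' → (S i ∩ S i').card ≤ 1)
    (μ : Measure ℝ) (hμ : IsProbabilityMeasure μ)
    (hcdf : ∀ x : ℝ, μ (Set.Iic x) =
      if x < 0 then 0
      else if x ≤ 1 / k then
        ENNReal.ofReal (((k : ℝ) * x) ^ ((1 : ℝ) / (((d : ℝ) - 1) * ((k : ℝ) - 1))))
      else 1)
    (σ : Fin n → Measure (Fin m → ℝ))
    (hσ : ∀ i, σ i = μ.map (fun x => fun j : Fin m => if j ∈ S i then x else 0))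
    (T : TieRule (Fin n) (Fin m)) :
    MixedNash (fun i => singleMinded (S i) 1) T σ ∧
    ∀ i, expectedUtility (fun i => singleMinded (S i) 1) T σ i = 0 := by
  have hμG : ∀ x, μ (Set.Iic x) = ENNReal.ofReal (bidCDF k d x) := fun x => by
    rw [hcdf x]
    split_ifs with hneg hle
    · rw [bidCDF_of_nonpos hk hd hneg.le, ENNReal.ofReal_zero]
    · rw [bidCDF_of_mem_Icc hk (not_lt.1 hneg) hle]
    · rw [bidCDF_of_le hk (not_le.1 hle).le, ENNReal.ofReal_one]
  obtain rfl : σ = bidStrategy μ S := funext hσ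
  have hzero i := integral_utility_bidStrategy_eq_zero (i := i) hk hd hcard hdeg hinter hμG T
  refine ⟨fun i c hc => ?_, hzero⟩
  rw [expectedUtility, expectedUtility, hzero]
  exact integral_utility_update_dirac_nonpos hk hd hcard hdeg hinter hμG T hc
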